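/- Let K ≥ 2 be an integer and γ > 0. Then (1/2)·∫_{−1}^{1} (1 + (γ/K)·f_K(πu/2))^{−1} du = 1 − (4/(πK))·(1 − q(γ)), where q(γ) = arctanh(√(γ/(1+γ)))/√(γ(1+γ)). (This is the expectation of the reciprocal interference factor over a normalized angle uniformly distributed on (−1,1).) -/

import Mathlib

open Real intervalIntegral

/-- The real inverse hyperbolic tangent, `arctanh x = (1/2) log((1+x)/(1-x))`. -/
noncomputable def arctanh (x : ℝ) : ℝ := (1 / 2) * Real.log ((1 + x) / (1 - x))

/-- The per-interferer attenuation factor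
`q(γ) = arctanh(√(γ/(1+γ))) / √(γ(1+γ))`. -/
noncomputable def q (γ : ℝ) : ℝ :=
  arctanh (Real.sqrt (γ / (1 + γ))) / Real.sqrt (γ * (1 + γ))

/-- The quadratic main-lobe kernel `f_K(x) = K - K³x²/4` for `|x| ≤ 2/K` and
`0` otherwise. -/
noncomputable def fK (K : ℕ) (x : ℝ) : ℝ :=
  if |x| ≤ 2 / (K : ℝ) then (K : ℝ) - (K : ℝ) ^ 3 * x ^ 2 / 4 else 0

/-! On the main lobe `|u| ≤ a = 4 / (π K)` the integrand is `(1 + γ (1 - (u / a)²))⁻¹`, which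
equals `1` at `u = ± a`, and off the lobe it is `1`. Since `K ≥ 2` the lobe lies inside `[-1, 1]`,
so the integral is `2 (1 - a)` plus `a ∫_{-1}^{1} (1 + γ (1 - t²))⁻¹ dt`, and the latter equals
`2 q(γ)` because `arctanh (r t) / (r (1 + γ))` with `r = √(γ / (1 + γ))` is an antiderivative. -/

lemma arctanh_neg (x : ℝ) : arctanh (-x) = -arctanh x := by
  rw [arctanh, arctanh, ← sub_eq_add_neg, sub_neg_eq_add,
    show (1 - x) / (1 + x) = ((1 + x) / (1 - x))⁻¹ from (inv_div _ _).symm, Real.log_inv]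
  ring

lemma hasDerivAt_arctanh {x : ℝ} (hx : |x| < 1) : HasDerivAt arctanh (1 - x ^ 2)⁻¹ x := by
  obtain ⟨hx₁, hx₂⟩ := abs_lt.mp hx
  have hquot := ((hasDerivAt_id x).const_add 1).div ((hasDerivAt_id x).const_sub 1)
    (by simp; linarith)
  refine ((hquot.log (div_pos (by simp; linarith) (by simp; linarith)).ne').const_mul
    (1 / 2)).congr_deriv ?_
  have h₁ : 1 + x ≠ 0 := by linarith
  have h₂ : 1 - x ≠ 0 := by linarith
  have h₃ : 1 - x ^ 2 = (1 + x) * (1 - x) := by ring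
  simp only [id, Pi.div_apply, h₃]
  field_simp
  ring

lemma sqrt_div_mul_of_nonneg (x : ℝ) {y : ℝ} (hy : 0 ≤ y) : √(x / y) * y = √(x * y) := by
  rcases hy.eq_or_lt with rfl | hy
  · simp
  rw [show x * y = x / y * y ^ 2 by field_simp, Real.sqrt_mul' _ (sq_nonneg y),
    Real.sqrt_sq hy.le]

lemma one_add_mul_one_sub_sq_pos {γ s : ℝ} (hγ : 0 ≤ γ) (hs : |s| ≤ 1) :
    0 < 1 + γ * (1 - s ^ 2) := by
  have : 0 ≤ 1 - s ^ 2 := by nlinarith [abs_le.mp hs]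
  positivity

lemma integral_inv_one_add_mul_one_sub_sq {γ : ℝ} (hγ : 0 < γ) :
    ∫ t in (-1 : ℝ)..1, (1 + γ * (1 - t ^ 2))⁻¹ = 2 * q γ := by
  set r := √(γ / (1 + γ)) with hr
  have hr₀ : 0 < r := Real.sqrt_pos.mpr (by positivity)
  have hr₁ : r < 1 := by
    rw [hr, Real.sqrt_lt' one_pos, one_pow, div_lt_one (by positivity)]
    linarith
  have hr_sq : r ^ 2 = γ / (1 + γ) := Real.sq_sqrt (by positivity)
  have hderiv : ∀ t ∈ Set.uIcc (-1 : ℝ) 1,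
      HasDerivAt (fun t => arctanh (r * t) / (r * (1 + γ))) (1 + γ * (1 - t ^ 2))⁻¹ t := by
    intro t ht
    rw [Set.uIcc_of_le (by norm_num)] at ht
    have hrt : |r * t| < 1 := by
      rw [abs_mul, abs_of_pos hr₀]
      exact lt_of_le_of_lt (mul_le_of_le_one_right hr₀.le (abs_le.mpr ht)) hr₁
    refine (((hasDerivAt_arctanh hrt).comp t ((hasDerivAt_id t).const_mul r)).div_const
      (r * (1 + γ))).congr_deriv ?_
    have hden : 1 - (r * t) ^ 2 = (1 + γ * (1 - t ^ 2)) / (1 + γ) := by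
      rw [mul_pow, hr_sq]
      field_simp
      ring
    rw [hden]
    field_simp
  have hcont : ContinuousOn (fun t : ℝ => (1 + γ * (1 - t ^ 2))⁻¹) (Set.uIcc (-1) 1) := by
    refine ContinuousOn.inv₀ (by fun_prop) fun t ht => ?_
    rw [Set.uIcc_of_le (by norm_num)] at ht
    exact (one_add_mul_one_sub_sq_pos hγ.le (abs_le.mpr ht)).ne'
  rw [intervalIntegral.integral_eq_sub_of_hasDerivAt hderiv hcont.intervalIntegrable,
    mul_neg_one, arctanh_neg, mul_one, q, hr, sqrt_div_mul_of_nonneg γ (by linarith)]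
  ring

lemma integral_ite_abs_le {g : ℝ → ℝ} {a : ℝ} (ha₀ : 0 ≤ a) (ha₁ : a ≤ 1)
    (hg : IntervalIntegrable g MeasureTheory.volume (-a) a) (hg_neg : g (-a) = 1)
    (hg_pos : g a = 1) :
    ∫ u in (-1 : ℝ)..1, (if |u| ≤ a then g u else 1) = 2 * (1 - a) + ∫ u in -a..a, g u := by
  set f := fun u : ℝ => if |u| ≤ a then g u else 1
  have hf_out : ∀ u, a ≤ |u| → f u = 1 := by
    intro u hu
    by_cases h : |u| ≤ a
    · simp only [f, if_pos h]
      rcases abs_eq ha₀ |>.mp (le_antisymm h hu) with rfl | rfl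
      exacts [hg_pos, hg_neg]
    · simp only [f, if_neg h]
  have hleft : Set.EqOn f 1 (Set.uIcc (-1) (-a)) := by
    intro u hu
    rw [Set.uIcc_of_le (by linarith)] at hu
    exact hf_out u (by rw [abs_of_nonpos (by linarith [hu.2])]; linarith [hu.2])
  have hright : Set.EqOn f 1 (Set.uIcc a 1) := by
    intro u hu
    rw [Set.uIcc_of_le ha₁] at hu
    exact hf_out u (le_trans hu.1 (le_abs_self u))
  have hmid : Set.EqOn f g (Set.uIcc (-a) a) := by
    intro u hu
    rw [Set.uIcc_of_le (by linarith)] at hu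
    simp only [f, if_pos (abs_le.mpr hu)]
  have hint : ∀ {b c : ℝ} {h : ℝ → ℝ}, Set.EqOn f h (Set.uIcc b c) →
      IntervalIntegrable h MeasureTheory.volume b c →
        IntervalIntegrable f MeasureTheory.volume b c :=
    fun heq hh => hh.congr (heq.symm.mono Set.uIoc_subset_uIcc)
  have hI₁ := hint hleft intervalIntegrable_const
  have hI₂ := hint hmid hg
  have hI₃ := hint hright intervalIntegrable_const
  rw [← intervalIntegral.integral_add_adjacent_intervals (hI₁.trans hI₂) hI₃,
    ← intervalIntegral.integral_add_adjacent_intervals hI₁ hI₂,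
    intervalIntegral.integral_congr hleft, intervalIntegral.integral_congr hmid,
    intervalIntegral.integral_congr hright]
  simp only [Pi.one_apply, intervalIntegral.integral_const, smul_eq_mul, mul_one]
  ring

lemma inv_one_add_mul_fK {K : ℕ} (hK : 0 < K) (γ u : ℝ) :
    (1 + (γ / K) * fK K (π * u / 2))⁻¹
      = if |u| ≤ 4 / (π * K) then (1 + γ * (1 - (u / (4 / (π * K))) ^ 2))⁻¹ else 1 := by
  have hK' : (0 : ℝ) < K := by exact_mod_cast hK
  have hlobe : |π * u / 2| ≤ 2 / K ↔ |u| ≤ 4 / (π * K) := by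
    rw [abs_div, abs_mul, abs_of_pos pi_pos, abs_two, div_le_div_iff₀ two_pos hK',
      le_div_iff₀ (by positivity)]
    constructor <;> intro h <;> linarith
  unfold fK
  split_ifs with h₁ h₂ h₂
  · congr 1
    field_simp
    ring
  · exact absurd (hlobe.mp h₁) h₂
  · exact absurd (hlobe.mpr h₂) h₁
  · simp

/-- Expectation of the reciprocal interference factor over a normalized angle
uniformly distributed on `(-1, 1)`: for an integer `K ≥ 2` and `γ > 0`,
`(1/2) ∫_{-1}^{1} (1 + (γ/K) f_K(πu/2))⁻¹ du = 1 - (4/(πK))(1 - q(γ))`. -/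
theorem uniform_angle_average_reciprocal_interference
    (K : ℕ) (hK : 2 ≤ K) (γ : ℝ) (hγ : 0 < γ) :
    (1 / 2) * ∫ u in (-1 : ℝ)..1, (1 + (γ / K) * fK K (π * u / 2))⁻¹
      = 1 - (4 / (π * K)) * (1 - q γ) := by
  set a := 4 / (π * K)
  have hK' : (2 : ℝ) ≤ K := by exact_mod_cast hK
  have ha₀ : 0 < a := by positivity
  have ha₁ : a ≤ 1 := by
    rw [div_le_one (by positivity)]
    nlinarith [pi_gt_three]
  have hprofile : IntervalIntegrable (fun u => (1 + γ * (1 - (u / a) ^ 2))⁻¹)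
      MeasureTheory.volume (-a) a := by
    refine ContinuousOn.intervalIntegrable (ContinuousOn.inv₀ (by fun_prop) fun u hu => ?_)
    rw [Set.uIcc_of_le (by linarith)] at hu
    refine (one_add_mul_one_sub_sq_pos hγ.le ?_).ne'
    rw [abs_div, abs_of_pos ha₀, div_le_one ha₀]
    exact abs_le.mpr hu
  have hscale : ∫ u in -a..a, (1 + γ * (1 - (u / a) ^ 2))⁻¹ = a * (2 * q γ) := by
    rw [intervalIntegral.integral_comp_div (fun t => (1 + γ * (1 - t ^ 2))⁻¹) ha₀.ne',
      neg_div, div_self ha₀.ne', integral_inv_one_add_mul_one_sub_sq hγ, smul_eq_mul]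
  simp only [inv_one_add_mul_fK (by omega : 0 < K)]
  rw [integral_ite_abs_le ha₀.le ha₁ hprofile (by simp [ha₀.ne']) (by simp [ha₀.ne']),
    hscale]
  ring
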